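/- Let α be the ideal of ST({x,y,z}) generated by the three elements \bar{yyz}, \bar{yxz}, \bar{yxy}, and let {α} be the ideal of the Zinbiel algebra Zin({x,y,z}) generated by α. Then the element w = \bar{xyyz} − \bar{yyxz} + \bar{zyxy} satisfies w ∈ {α} ∩ ST({x,y,z}) but w ∉ α; consequently the quotient Tortkara algebra ST({x,y,z})/α is not special (it is not isomorphic to a subalgebra of A^(−) for any Zinbiel algebra A). -/

import Mathlib

/-- Nonempty words in the alphabet `X`. -/
def Word (X : Type) : Type := {l : List X // l ≠ []}

/-- The underlying vector space of the free Zinbiel algebra on `X` over `K`: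
the space with basis the nonempty words in `X`. -/
abbrev Zin (K X : Type) [Field K] : Type := Word X →₀ K

/-- All shuffles (interleavings) of two words. -/
def shuffles {X : Type} : List X → List X → List (List X)
  | [], l => [l]
  | a :: as, [] => [a :: as]
  | a :: as, b :: bs =>
      ((shuffles as (b :: bs)).map fun w => a :: w) ++
        ((shuffles (a :: as) bs).map fun w => b :: w)
  termination_by l₁ l₂ => l₁.length + l₂.length

/-- The basis vector of `Zin K X` corresponding to a word (`0` for the empty word). -/
noncomputable def ofList {K X : Type} [Field K] : List X → Zin K X
  | [] => 0
  | a :: t => Finsupp.single ⟨a :: t, by simp⟩ 1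

/-- Sum of the basis vectors of a list of words. -/
noncomputable def ofLists {K X : Type} [Field K] (ls : List (List X)) : Zin K X :=
  (ls.map (ofList (K := K))).sum

/-- The letter `x` as an element of `Zin K X`. -/
noncomputable def ofLetter {K X : Type} [Field K] (x : X) : Zin K X :=
  Finsupp.single ⟨[x], by simp⟩ 1

/-- The Zinbiel product on `Zin K X`, defined on basis words by
`u ∘ (v ++ [y]) = (u ⧢ v) ++ [y]` and extended bilinearly. -/
noncomputable def zmul {K X : Type} [Field K] (f g : Zin K X) : Zin K X :=
  f.sum fun u cu => g.sum fun w cw =>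
    (cu * cw) • ofLists ((shuffles u.1 w.1.dropLast).map fun s => s ++ [w.1.getLast w.2])

/-- The shuffle product on `Zin K X`, extended bilinearly from words. -/
noncomputable def shMul {K X : Type} [Field K] (f g : Zin K X) : Zin K X :=
  f.sum fun u cu => g.sum fun w cw => (cu * cw) • ofLists (shuffles u.1 w.1)

/-- The commutator `[f,g] = f∘g - g∘f` in `Zin K X`. -/
noncomputable def zbracket {K X : Type} [Field K] (f g : Zin K X) : Zin K X :=
  zmul f g - zmul g f

/-- The anticommutator `{f,g} = f∘g + g∘f` in `Zin K X`. -/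
noncomputable def jprod {K X : Type} [Field K] (f g : Zin K X) : Zin K X :=
  zmul f g + zmul g f

/-- Swap the last two letters of a word (identity on shorter words). -/
def swapLast {X : Type} (l : List X) : List X :=
  match l.reverse with
  | z :: y :: t => (y :: z :: t).reverse
  | _ => l

/-- The linear map `p : Zin(X) → Zin(X)`: `p(x) = -x` on letters, and `p` swaps
the last two letters of a word of length ≥ 2. -/
noncomputable def pMap {K X : Type} [Field K] (f : Zin K X) : Zin K X :=
  f.sum fun w c =>
    c • (if w.1.length = 1 then -(Finsupp.single w (1 : K)) else ofList (swapLast w.1))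

/-- `bar f = f - p(f)`. -/
noncomputable def bar {K X : Type} [Field K] (f : Zin K X) : Zin K X := f - pMap f

/-- The skew element `\bar{w} = w - p(w)` associated to a word `w`. -/
noncomputable def skew {K X : Type} [Field K] (w : Word X) : Zin K X :=
  bar (Finsupp.single w 1)

/-- Membership in `ST(X)`, the subalgebra of `(Zin(X), [·,·])` generated by the
letters: the free special Tortkara algebra on `X`. -/
inductive InST {K X : Type} [Field K] : Zin K X → Prop
  | letter (x : X) : InST (ofLetter x)
  | zero : InST 0
  | add {f g : Zin K X} : InST f → InST g → InST (f + g)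
  | smul (c : K) {f : Zin K X} : InST f → InST (c • f)
  | bracket {f g : Zin K X} : InST f → InST g → InST (zbracket f g)

/-- Membership in `J(X)`, the subalgebra of `(Zin(X), {·,·})` generated by the
letters: the Jordan elements of `Zin(X)`. -/
inductive InJ {K X : Type} [Field K] : Zin K X → Prop
  | letter (x : X) : InJ (ofLetter x)
  | zero : InJ 0
  | add {f g : Zin K X} : InJ f → InJ g → InJ (f + g)
  | smul (c : K) {f : Zin K X} : InJ f → InJ (c • f)
  | jmul {f g : Zin K X} : InJ f → InJ g → InJ (jprod f g)

/-- The left-normed anticommutator `{{⋯{x₁,x₂}⋯},xₙ}` of the letters of a word. -/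
noncomputable def dynkinWord {K X : Type} [Field K] : List X → Zin K X
  | [] => 0
  | x :: xs => xs.foldl (fun acc y => jprod acc (ofLetter y)) (ofLetter x)

/-- The Dynkin map `D : Zin(X) → Zin(X)`. -/
noncomputable def dynkin {K X : Type} [Field K] (f : Zin K X) : Zin K X :=
  f.sum fun w c => c • dynkinWord w.1


/-- A bundled Zinbiel algebra over `K`: a nonunital nonassociative `K`-algebra whose
product satisfies the Zinbiel identity `a∘(b∘c) = (a∘b + b∘a)∘c`. -/
structure ZinbielAlgebra (K : Type) [Field K] : Type 1 where
  carrier : Type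
  [ring : NonUnitalNonAssocRing carrier]
  [mod : Module K carrier]
  [smulComm : SMulCommClass K carrier carrier]
  [tower : IsScalarTower K carrier carrier]
  zinbiel : ∀ a b c : carrier, a * (b * c) = (a * b + b * a) * c

attribute [instance] ZinbielAlgebra.ring ZinbielAlgebra.mod
  ZinbielAlgebra.smulComm ZinbielAlgebra.tower

/-- A bundled Tortkara algebra over `K`: an anticommutative nonunital nonassociative
`K`-algebra satisfying `(ab)(cb) = J(a,b,c)b`, where `J(a,b,c) = (ab)c+(bc)a+(ca)b`. -/
structure TortkaraAlgebra (K : Type) [Field K] : Type 1 where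
  carrier : Type
  [ring : NonUnitalNonAssocRing carrier]
  [mod : Module K carrier]
  [smulComm : SMulCommClass K carrier carrier]
  [tower : IsScalarTower K carrier carrier]
  anticomm : ∀ a b : carrier, a * b = -(b * a)
  tortkara : ∀ a b c : carrier,
    (a * b) * (c * b) = ((a * b) * c + (b * c) * a + (c * a) * b) * b

attribute [instance] TortkaraAlgebra.ring TortkaraAlgebra.mod
  TortkaraAlgebra.smulComm TortkaraAlgebra.tower

/-- The free special Tortkara algebra on three generators `x = 0`, `y = 1`, `z = 2`,
as a subspace of `Zin K (Fin 3)`. -/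
noncomputable def ST3 (K : Type) [Field K] : Submodule K (Zin K (Fin 3)) :=
  Submodule.span K {f | InST f}

/-- Membership in the ideal `α` of `ST({x,y,z})` generated by
`\bar{yyz}, \bar{yxz}, \bar{yxy}` (with `x = 0`, `y = 1`, `z = 2`). -/
inductive InAlpha (K : Type) [Field K] : Zin K (Fin 3) → Prop
  | g1 : InAlpha K (bar (ofList [1, 1, 2]))
  | g2 : InAlpha K (bar (ofList [1, 0, 2]))
  | g3 : InAlpha K (bar (ofList [1, 0, 1]))
  | zero : InAlpha K 0
  | add {f g : Zin K (Fin 3)} : InAlpha K f → InAlpha K g → InAlpha K (f + g)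
  | smul (c : K) {f : Zin K (Fin 3)} : InAlpha K f → InAlpha K (c • f)
  | brl {f g : Zin K (Fin 3)} : InAlpha K f → InST g → InAlpha K (zbracket f g)
  | brr {f g : Zin K (Fin 3)} : InAlpha K f → InST g → InAlpha K (zbracket g f)

/-- Membership in `{α}`, the ideal of the Zinbiel algebra `Zin({x,y,z})`
generated by `α`. -/
inductive InZAlpha (K : Type) [Field K] : Zin K (Fin 3) → Prop
  | ofAlpha {f : Zin K (Fin 3)} : InAlpha K f → InZAlpha K f
  | add {f g : Zin K (Fin 3)} : InZAlpha K f → InZAlpha K g → InZAlpha K (f + g)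
  | smul (c : K) {f : Zin K (Fin 3)} : InZAlpha K f → InZAlpha K (c • f)
  | mull (g : Zin K (Fin 3)) {f : Zin K (Fin 3)} : InZAlpha K f → InZAlpha K (zmul g f)
  | mulr (g : Zin K (Fin 3)) {f : Zin K (Fin 3)} : InZAlpha K f → InZAlpha K (zmul f g)

attribute [reducible] Word

section Lemmas
variable {K X : Type} [Field K]

open Finsupp

theorem length_of_mem_shuffles (u v : List X) (s : List X) (h : s ∈ shuffles u v) :
    s.length = u.length + v.length := by
  induction u, v using shuffles.induct generalizing s with
  | case1 => simp_all [shuffles]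
  | case2 => simp_all [shuffles]
  | case3 a as b bs ih1 ih2 =>
    simp only [shuffles, List.mem_append, List.mem_map] at h
    rcases h with ⟨t, ht, rfl⟩ | ⟨t, ht, rfl⟩
    · have := ih1 t ht; simp at this ⊢; omega
    · have := ih2 t ht; simp at this ⊢; omega

theorem ofList_eq_single (l : List X) (h : l ≠ []) :
    (ofList l : Zin K X) = Finsupp.single ⟨l, h⟩ 1 := by
  cases l with
  | nil => exact absurd rfl h
  | cons a t => rfl

-- bilinearity of zmul
theorem zmul_zero_left (g : Zin K X) : zmul 0 g = 0 := by
  simp [zmul]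

theorem zmul_zero_right (f : Zin K X) : zmul f 0 = 0 := by
  simp [zmul]

theorem zmul_add_left (f f' g : Zin K X) : zmul (f + f') g = zmul f g + zmul f' g := by
  unfold zmul
  rw [Finsupp.sum_add_index']
  · intro a; simp
  · intro a b₁ b₂; rw [← Finsupp.sum_add]; congr 1; ext w c; rw [add_mul, add_smul]

theorem zmul_add_right (f g g' : Zin K X) : zmul f (g + g') = zmul f g + zmul f g' := by
  unfold zmul
  rw [← Finsupp.sum_add]
  congr 1; ext u cu
  rw [Finsupp.sum_add_index']
  · intro a; simp
  · intro a b₁ b₂; rw [mul_add, add_smul]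

theorem zmul_smul_left (c : K) (f g : Zin K X) : zmul (c • f) g = c • zmul f g := by
  unfold zmul
  rw [Finsupp.sum_smul_index', Finsupp.smul_sum]
  · congr 1; funext u cu
    rw [Finsupp.smul_sum]
    congr 1; funext w cw
    rw [smul_eq_mul, smul_smul, mul_assoc]
  · intro a; simp

theorem zmul_smul_right (c : K) (f g : Zin K X) : zmul f (c • g) = c • zmul f g := by
  unfold zmul
  rw [Finsupp.smul_sum]
  congr 1; funext u cu
  rw [Finsupp.sum_smul_index', Finsupp.smul_sum]
  · congr 1; funext w cw
    rw [smul_eq_mul, smul_smul, mul_left_comm]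
  · intro a; simp

theorem zmul_neg_left (f g : Zin K X) : zmul (-f) g = -zmul f g := by
  have := zmul_smul_left (-1 : K) f g; simpa using this

theorem zmul_neg_right (f g : Zin K X) : zmul f (-g) = -zmul f g := by
  have := zmul_smul_right (-1 : K) f g; simpa using this

theorem zmul_sub_left (f f' g : Zin K X) : zmul (f - f') g = zmul f g - zmul f' g := by
  rw [sub_eq_add_neg, zmul_add_left, zmul_neg_left, sub_eq_add_neg]

theorem zmul_sub_right (f g g' : Zin K X) : zmul f (g - g') = zmul f g - zmul f g' := by
  rw [sub_eq_add_neg, zmul_add_right, zmul_neg_right, sub_eq_add_neg]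

theorem zmul_single_single (u w : Word X) (cu cw : K) :
    zmul (Finsupp.single u cu) (Finsupp.single w cw) =
      (cu * cw) • ofLists ((shuffles u.1 w.1.dropLast).map fun s => s ++ [w.1.getLast w.2]) := by
  unfold zmul
  rw [Finsupp.sum_single_index, Finsupp.sum_single_index]
  · simp
  · rw [Finsupp.sum_single_index] <;> simp

end Lemmas

section Lemmas2
variable {K X : Type} [Field K]

theorem zmul_ofList' (u v : List X) (y : X) (hu : u ≠ []) :
    zmul (ofList u : Zin K X) (ofList (v ++ [y])) =
      ofLists ((shuffles u v).map fun s => s ++ [y]) := by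
  rw [ofList_eq_single u hu, ofList_eq_single (v ++ [y]) (by simp),
    zmul_single_single]
  simp [List.dropLast_concat]

theorem zmul_append (u : List X) (hu : u ≠ []) (y : X) :
    zmul (ofList u : Zin K X) (ofList [y]) = ofList (u ++ [y]) := by
  have := zmul_ofList' (K := K) u [] y hu
  simp only [List.nil_append] at this
  rw [this]
  cases u with
  | nil => exact absurd rfl hu
  | cons a t => simp [shuffles, ofLists]

theorem zmul_letter₂ (a b c : X) :
    zmul (ofList [a] : Zin K X) (ofList [b, c]) = ofList [a, b, c] + ofList [b, a, c] := by
  have := zmul_ofList' (K := K) [a] [b] c (by simp)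
  simp only [List.singleton_append] at this
  rw [this]
  simp [shuffles, ofLists]

theorem zmul_letter₃ (a b c d : X) :
    zmul (ofList [a] : Zin K X) (ofList [b, c, d]) =
      ofList [a, b, c, d] + ofList [b, a, c, d] + ofList [b, c, a, d] := by
  have := zmul_ofList' (K := K) [a] [b, c] d (by simp)
  simp only [List.cons_append, List.singleton_append, List.nil_append] at this
  rw [this]
  simp [shuffles, ofLists]
  abel

theorem pMap_single (w : Word X) (c : K) :
    pMap (Finsupp.single w c) =
      c • (if w.1.length = 1 then -(Finsupp.single w (1 : K)) else ofList (swapLast w.1)) := by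
  unfold pMap
  rw [Finsupp.sum_single_index]
  simp

theorem bar_ofList₂ (a b : X) (l : List X) :
    (bar (ofList (a :: b :: l)) : Zin K X) =
      ofList (a :: b :: l) - ofList (swapLast (a :: b :: l)) := by
  rw [bar, ofList_eq_single (a :: b :: l) (by simp), pMap_single]
  simp only [List.length_cons]
  rw [if_neg (by omega)]
  rw [one_smul, ← ofList_eq_single]

end Lemmas2

section T4
theorem ofLetter_eq {K X : Type} [Field K] (a : X) : (ofLetter a : Zin K X) = ofList [a] := rfl

theorem keyB (K : Type) [Field K] :
    (2 : K) • (bar (ofList [0, 1, 1, 2]) - bar (ofList [1, 1, 0, 2]) + bar (ofList [2, 1, 0, 1]) : Zin K (Fin 3)) =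
      -zbracket (zbracket (zbracket (ofLetter 0) (ofLetter 1)) (ofLetter 2)) (ofLetter 1) +
        (zbracket (zbracket (zbracket (ofLetter 0) (ofLetter 2)) (ofLetter 1)) (ofLetter 1) -
          zbracket (zbracket (zbracket (ofLetter 1) (ofLetter 2)) (ofLetter 0)) (ofLetter 1)) := by
  simp only [ofLetter_eq, zbracket, bar_ofList₂, swapLast, List.reverse_cons, List.reverse_nil,
    List.nil_append, List.cons_append, zmul_sub_right, zmul_sub_left, zmul_add_right, zmul_add_left,
    zmul_append, zmul_letter₂, zmul_letter₃, ne_eq, reduceCtorEq, not_false_eq_true]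
  module

theorem keyA (K : Type) [Field K] :
    (bar (ofList [0, 1, 1, 2]) - bar (ofList [1, 1, 0, 2]) + bar (ofList [2, 1, 0, 1]) : Zin K (Fin 3)) =
      zmul (ofList [0]) (bar (ofList [1, 1, 2])) +
        ((-1 : K) • zmul (ofList [1]) (bar (ofList [1, 0, 2])) +
          zmul (ofList [2]) (bar (ofList [1, 0, 1]))) := by
  simp only [bar_ofList₂, swapLast, List.reverse_cons, List.reverse_nil, List.nil_append,
    List.cons_append, zmul_sub_right, zmul_letter₃]
  module


theorem keyBN (K : Type) [Field K] :
    (2 : K) • (bar (ofList ([0, 1, 1, 2] : List ℕ)) - bar (ofList [1, 1, 0, 2]) + bar (ofList [2, 1, 0, 1]) : Zin K ℕ) =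
      -zbracket (zbracket (zbracket (ofLetter 0) (ofLetter 1)) (ofLetter 2)) (ofLetter 1) +
        (zbracket (zbracket (zbracket (ofLetter 0) (ofLetter 2)) (ofLetter 1)) (ofLetter 1) -
          zbracket (zbracket (zbracket (ofLetter 1) (ofLetter 2)) (ofLetter 0)) (ofLetter 1)) := by
  simp only [ofLetter_eq, zbracket, bar_ofList₂, swapLast, List.reverse_cons, List.reverse_nil,
    List.nil_append, List.cons_append, zmul_sub_right, zmul_sub_left, zmul_add_right, zmul_add_left,
    zmul_append, zmul_letter₂, zmul_letter₃, ne_eq, reduceCtorEq, not_false_eq_true]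
  module

end T4

section Lemmas3
variable {K X : Type} [Field K]

open Finsupp

instance wordDecEq [DecidableEq X] : DecidableEq (Word X) := by
  unfold Word; infer_instance

/-- Truncation to words of length ≤ 4. -/
noncomputable def trunc (f : Zin K X) : Zin K X :=
  f.filter (fun w : Word X => w.1.length ≤ 4)

theorem trunc_zero : trunc (0 : Zin K X) = 0 := by
  simp [trunc, Finsupp.filter_zero]

theorem trunc_add (f g : Zin K X) : trunc (f + g) = trunc f + trunc g := by
  simp [trunc, Finsupp.filter_add]

theorem trunc_smul (c : K) (f : Zin K X) : trunc (c • f) = c • trunc f := by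
  ext w
  by_cases h : w.1.length ≤ 4 <;> simp [trunc, Finsupp.filter_apply, h]

theorem trunc_neg (f : Zin K X) : trunc (-f) = -trunc f := by
  ext w
  by_cases h : w.1.length ≤ 4 <;> simp [trunc, Finsupp.filter_apply, h]

theorem trunc_sub (f g : Zin K X) : trunc (f - g) = trunc f - trunc g := by
  rw [sub_eq_add_neg, trunc_add, trunc_neg, sub_eq_add_neg]

theorem trunc_single_of_le [DecidableEq X] (w : Word X) (c : K) (h : w.1.length ≤ 4) :
    trunc (Finsupp.single w c) = Finsupp.single w c := by
  classical
  ext w'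
  rw [trunc, Finsupp.filter_apply]
  split_ifs with hw
  · rfl
  · symm
    rw [Finsupp.single_apply_eq_zero]
    intro h'
    subst h'
    exact absurd h hw

theorem trunc_eq_zero (f : Zin K X) (h : ∀ w ∈ f.support, ¬ w.1.length ≤ 4) :
    trunc f = 0 := by
  ext w
  rw [trunc, Finsupp.filter_apply]
  split_ifs with hw
  · by_cases hs : w ∈ f.support
    · exact absurd hw (h w hs)
    · simpa using (Finsupp.notMem_support_iff.mp hs)
  · rfl

theorem trunc_eq_self (f : Zin K X) (h : ∀ w ∈ f.support, w.1.length ≤ 4) :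
    trunc f = f := by
  ext w
  rw [trunc, Finsupp.filter_apply]
  split_ifs with hw
  · rfl
  · by_cases hs : w ∈ f.support
    · exact absurd (h w hs) hw
    · simpa using (Finsupp.notMem_support_iff.mp hs).symm

theorem mem_support_zmul [DecidableEq X] {f g : Zin K X} {w : Word X} (hw : w ∈ (zmul f g).support) :
    ∃ u ∈ f.support, ∃ v ∈ g.support, w.1.length = u.1.length + v.1.length := by
  have h1 := Finsupp.support_sum hw
  rw [Finset.mem_biUnion] at h1
  obtain ⟨u, hu, h2⟩ := h1
  have h3 := Finsupp.support_sum h2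
  rw [Finset.mem_biUnion] at h3
  obtain ⟨v, hv, h4⟩ := h3
  refine ⟨u, hu, v, hv, ?_⟩
  have h5 : w ∈ (ofLists ((shuffles u.1 v.1.dropLast).map fun s => s ++ [v.1.getLast v.2])
      : Zin K X).support := Finsupp.support_smul h4
  -- support of ofLists is contained in words from the list
  have h6 : ∀ (L : List (List X)) (w : Word X), w ∈ (ofLists L : Zin K X).support → w.1 ∈ L := by
    intro L
    induction L with
    | nil => intro w hw; simp [ofLists] at hw
    | cons a t ih =>
      intro w hw
      rw [ofLists, List.map_cons, List.sum_cons] at hw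
      have := Finsupp.support_add hw
      rw [Finset.mem_union] at this
      rcases this with h | h
      · cases a with
        | nil => simp [ofList] at h
        | cons b bs =>
          have := Finsupp.support_single_subset h
          simp only [Finset.mem_singleton] at this
          subst this
          simp
      · exact List.mem_cons_of_mem _ (ih w h)
  have h7 := h6 _ _ h5
  rw [List.mem_map] at h7
  obtain ⟨s, hs, hw'⟩ := h7
  have hlen := length_of_mem_shuffles _ _ _ hs
  have hv1 : v.1.length ≥ 1 := List.length_pos_iff.mpr v.2
  rw [← hw']
  simp only [List.length_append, List.length_cons, List.length_nil, hlen,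
    List.length_dropLast]
  omega

theorem trunc_zmul_eq_zero [DecidableEq X] {f g : Zin K X} (hf : ∀ u ∈ f.support, 4 ≤ u.1.length) :
    trunc (zmul f g) = 0 := by
  apply trunc_eq_zero
  intro w hw
  obtain ⟨u, hu, v, hv, hlen⟩ := mem_support_zmul hw
  have h1 := hf u hu
  have h2 : v.1.length ≥ 1 := List.length_pos_iff.mpr v.2
  omega

theorem trunc_zmul_eq_zero' [DecidableEq X] {f g : Zin K X} (hg : ∀ u ∈ g.support, 4 ≤ u.1.length) :
    trunc (zmul f g) = 0 := by
  apply trunc_eq_zero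
  intro w hw
  obtain ⟨u, hu, v, hv, hlen⟩ := mem_support_zmul hw
  have h1 := hg v hv
  have h2 : u.1.length ≥ 1 := List.length_pos_iff.mpr u.2
  omega

theorem trunc_zmul_left [DecidableEq X] (f g : Zin K X) : trunc (zmul f g) = trunc (zmul (trunc f) g) := by
  have hsplit : f = trunc f + f.filter (fun w : Word X => ¬ w.1.length ≤ 4) :=
    (Finsupp.filter_pos_add_filter_neg f _).symm
  conv_lhs => rw [hsplit]
  rw [zmul_add_left, trunc_add]
  have : trunc (zmul (f.filter (fun w : Word X => ¬ w.1.length ≤ 4)) g) = 0 := by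
    apply trunc_zmul_eq_zero
    intro u hu
    rw [Finsupp.support_filter, Finset.mem_filter] at hu
    omega
  rw [this, add_zero]

theorem trunc_zmul_right [DecidableEq X] (f g : Zin K X) : trunc (zmul f g) = trunc (zmul f (trunc g)) := by
  have hsplit : g = trunc g + g.filter (fun w : Word X => ¬ w.1.length ≤ 4) :=
    (Finsupp.filter_pos_add_filter_neg g _).symm
  conv_lhs => rw [hsplit]
  rw [zmul_add_right, trunc_add]
  have : trunc (zmul f (g.filter (fun w : Word X => ¬ w.1.length ≤ 4))) = 0 := by
    apply trunc_zmul_eq_zero'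
    intro u hu
    rw [Finsupp.support_filter, Finset.mem_filter] at hu
    omega
  rw [this, add_zero]

end Lemmas3

section T6
variable (K : Type) [Field K]

noncomputable def LL (f : Zin K (Fin 3)) : K :=
  4 * f ⟨[0,1,1,2], by simp⟩ + f ⟨[1,0,1,2], by simp⟩
    - 2 * f ⟨[1,1,0,2], by simp⟩ + 3 * f ⟨[1,2,0,1], by simp⟩

example : LL K (zbracket (bar (ofList [1,1,2])) (ofLetter 0)) = 0 := by
  simp only [ofLetter_eq, zbracket, bar_ofList₂, swapLast, List.reverse_cons, List.reverse_nil,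
    List.nil_append, List.cons_append, zmul_sub_right, zmul_sub_left,
    zmul_append, zmul_letter₃, ne_eq, reduceCtorEq, not_false_eq_true]
  simp (config := { decide := true }) [LL, ofList, Finsupp.single_apply, Subtype.mk.injEq]
  try norm_num

example : LL K (bar (ofList [1,1,2])) = 0 := by
  simp only [bar_ofList₂, swapLast, List.reverse_cons, List.reverse_nil,
    List.nil_append, List.cons_append]
  simp (config := { decide := true }) [LL, ofList, Finsupp.single_apply, Subtype.mk.injEq]
  try norm_num

example [CharZero K] :
    LL K (bar (ofList [0, 1, 1, 2]) - bar (ofList [1, 1, 0, 2]) + bar (ofList [2, 1, 0, 1])) = 6 := by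
  simp only [bar_ofList₂, swapLast, List.reverse_cons, List.reverse_nil,
    List.nil_append, List.cons_append]
  simp (config := { decide := true }) [LL, ofList, Finsupp.single_apply, Subtype.mk.injEq]
  try norm_num
end T6

section Part3
variable {K : Type} [Field K]

open Finsupp

-- zbracket bilinearity
theorem zbracket_zero_left {X : Type} (g : Zin K X) : zbracket 0 g = 0 := by
  rw [zbracket, zmul_zero_left, zmul_zero_right, sub_zero]

theorem zbracket_zero_right {X : Type} (f : Zin K X) : zbracket f 0 = 0 := by
  rw [zbracket, zmul_zero_left, zmul_zero_right, sub_zero]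

theorem zbracket_add_left {X : Type} (f f' g : Zin K X) :
    zbracket (f + f') g = zbracket f g + zbracket f' g := by
  simp only [zbracket, zmul_add_left, zmul_add_right]; abel

theorem zbracket_add_right {X : Type} (f g g' : Zin K X) :
    zbracket f (g + g') = zbracket f g + zbracket f g' := by
  simp only [zbracket, zmul_add_left, zmul_add_right]; abel

theorem zbracket_smul_left {X : Type} (c : K) (f g : Zin K X) :
    zbracket (c • f) g = c • zbracket f g := by
  simp only [zbracket, zmul_smul_left, zmul_smul_right, smul_sub]

theorem zbracket_smul_right {X : Type} (c : K) (f g : Zin K X) :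
    zbracket f (c • g) = c • zbracket f g := by
  simp only [zbracket, zmul_smul_left, zmul_smul_right, smul_sub]

theorem zbracket_swap {X : Type} (f g : Zin K X) : zbracket g f = -zbracket f g := by
  rw [zbracket, zbracket, neg_sub]

theorem trunc_zmul_eq_zero_of {X : Type} [DecidableEq X] {f g : Zin K X}
    (h : ∀ u ∈ f.support, ∀ v ∈ g.support, 5 ≤ u.1.length + v.1.length) :
    trunc (zmul f g) = 0 := by
  apply trunc_eq_zero
  intro w hw
  obtain ⟨u, hu, v, hv, hlen⟩ := mem_support_zmul hw
  have := h u hu v hv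
  omega

-- the three generators
noncomputable def Gv (K : Type) [Field K] : Fin 3 → Zin K (Fin 3) :=
  ![bar (ofList [1, 1, 2]), bar (ofList [1, 0, 2]), bar (ofList [1, 0, 1])]

def Sset (K : Type) [Field K] : Set (Zin K (Fin 3)) :=
  Set.range (Gv K) ∪
    Set.range (fun p : Fin 3 × Fin 3 => zbracket (Gv K p.1) (ofLetter p.2))

noncomputable def Tsub (K : Type) [Field K] : Submodule K (Zin K (Fin 3)) :=
  Submodule.span K (Sset K)

theorem bar3_expand (a b c : Fin 3) :
    (bar (ofList [a, b, c]) : Zin K (Fin 3)) = ofList [a, b, c] - ofList [a, c, b] := by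
  rw [bar_ofList₂]
  simp [swapLast]

theorem supp_sub_pair {X : Type} [DecidableEq X] (w w' : Word X) (c c' : K) :
    ∀ u ∈ (Finsupp.single w c - Finsupp.single w' c').support, u = w ∨ u = w' := by
  intro u hu
  have := Finsupp.support_sub (f := Finsupp.single w c) (g := Finsupp.single w' c') hu
  rw [Finset.mem_union] at this
  rcases this with h | h
  · exact Or.inl (Finset.mem_singleton.mp (Finsupp.support_single_subset h))
  · exact Or.inr (Finset.mem_singleton.mp (Finsupp.support_single_subset h))

theorem supp_bar3 (a b c : Fin 3) :
    ∀ u ∈ (bar (ofList [a, b, c]) : Zin K (Fin 3)).support, u.1.length = 3 := by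
  rw [bar3_expand, ofList_eq_single _ (by simp), ofList_eq_single _ (by simp)]
  intro u hu
  rcases supp_sub_pair _ _ _ _ u hu with h | h <;> subst h <;> rfl

theorem supp_Gv (k : Fin 3) : ∀ u ∈ (Gv K k).support, u.1.length = 3 := by
  fin_cases k
  · exact fun u hu => supp_bar3 1 1 2 u (by simpa [Gv] using hu)
  · exact fun u hu => supp_bar3 1 0 2 u (by simpa [Gv] using hu)
  · exact fun u hu => supp_bar3 1 0 1 u (by simpa [Gv] using hu)

theorem supp_letter (a : Fin 3) :
    ∀ u ∈ (ofLetter a : Zin K (Fin 3)).support, u.1.length = 1 := by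
  intro u hu
  have := Finsupp.support_single_subset hu
  rw [Finset.mem_singleton] at this
  subst this; rfl

theorem supp_gen (k a : Fin 3) :
    ∀ u ∈ (zbracket (Gv K k) (ofLetter a)).support, u.1.length = 4 := by
  intro u hu
  have := Finsupp.support_sub (f := zmul (Gv K k) (ofLetter a))
    (g := zmul (ofLetter a) (Gv K k)) hu
  rw [Finset.mem_union] at this
  rcases this with h | h
  · obtain ⟨p, hp, q, hq, hl⟩ := mem_support_zmul h
    rw [supp_Gv k p hp, supp_letter a q hq] at hl; omega
  · obtain ⟨p, hp, q, hq, hl⟩ := mem_support_zmul h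
    rw [supp_letter a p hp, supp_Gv k q hq] at hl; omega

theorem trunc_Gv (k : Fin 3) : trunc (Gv K k) = Gv K k :=
  trunc_eq_self _ (fun u hu => by rw [supp_Gv k u hu]; omega)

theorem trunc_gen (k a : Fin 3) :
    trunc (zbracket (Gv K k) (ofLetter a)) = zbracket (Gv K k) (ofLetter a) :=
  trunc_eq_self _ (fun u hu => by rw [supp_gen k a u hu])

theorem trunc_zbracket_deg4 {v : Zin K (Fin 3)}
    (hv : ∀ u ∈ v.support, 4 ≤ u.1.length) (g : Zin K (Fin 3)) :
    trunc (zbracket v g) = 0 := by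
  rw [zbracket, trunc_sub, trunc_zmul_eq_zero_of, trunc_zmul_eq_zero_of, sub_zero]
  · intro u hu p hp
    have h1 := hv p hp
    have h2 : 1 ≤ u.1.length := List.length_pos_iff.mpr u.2
    omega
  · intro u hu p hp
    have h1 := hv u hu
    have h2 : 1 ≤ p.1.length := List.length_pos_iff.mpr p.2
    omega

theorem genA (k : Fin 3) : ∀ g : Zin K (Fin 3), trunc (zbracket (Gv K k) g) ∈ Tsub K := by
  intro g
  induction g using Finsupp.induction with
  | zero =>
    rw [zbracket_zero_right, trunc_zero]; exact zero_mem _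
  | single_add a b f haf hb ih =>
    rw [zbracket_add_right, trunc_add]
    refine add_mem ?_ ih
    obtain ⟨l, hl⟩ := a
    match l with
    | [] => exact absurd rfl hl
    | [x] =>
      have e1 : (Finsupp.single (⟨[x], hl⟩ : Word (Fin 3)) b : Zin K (Fin 3)) =
          b • ofLetter x := by
        rw [ofLetter, Finsupp.smul_single, smul_eq_mul, mul_one]
      rw [e1, zbracket_smul_right, trunc_smul, trunc_gen]
      exact Submodule.smul_mem _ _
        (Submodule.subset_span (Or.inr ⟨(k, x), rfl⟩))
    | x :: y :: ys =>
      have : trunc (zbracket (Gv K k) (Finsupp.single (⟨x :: y :: ys, hl⟩ : Word (Fin 3)) b)) = 0 := by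
        rw [zbracket, trunc_sub, trunc_zmul_eq_zero_of, trunc_zmul_eq_zero_of, sub_zero]
        · intro u hu p hp
          have h1 := Finset.mem_singleton.mp (Finsupp.support_single_subset hu)
          subst h1
          have h2 := supp_Gv k p hp
          simp only [List.length_cons] at *
          omega
        · intro u hu p hp
          have h1 := supp_Gv k u hu
          have h2 := Finset.mem_singleton.mp (Finsupp.support_single_subset hp)
          subst h2
          simp only [List.length_cons] at *
          omega
      rw [this]; exact zero_mem _

theorem bracket_closure (v : Zin K (Fin 3)) (hv : v ∈ Tsub K) (g : Zin K (Fin 3)) :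
    trunc (zbracket v g) ∈ Tsub K := by
  induction hv using Submodule.span_induction generalizing g with
  | mem s hs =>
    rcases hs with ⟨k, rfl⟩ | ⟨⟨k, a⟩, rfl⟩
    · exact genA k g
    · rw [trunc_zbracket_deg4 (fun u hu => by rw [supp_gen k a u hu]) g]
      exact zero_mem _
  | zero => rw [zbracket_zero_left, trunc_zero]; exact zero_mem _
  | add x y hx hy ihx ihy =>
    rw [zbracket_add_left, trunc_add]; exact add_mem (ihx g) (ihy g)
  | smul c x hx ihx =>
    rw [zbracket_smul_left, trunc_smul]; exact Submodule.smul_mem _ _ (ihx g)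

theorem trunc_zbracket_left (f g : Zin K (Fin 3)) :
    trunc (zbracket f g) = trunc (zbracket (trunc f) g) := by
  rw [zbracket, zbracket, trunc_sub, trunc_sub, ← trunc_zmul_left, ← trunc_zmul_right]

theorem alpha_trunc (f : Zin K (Fin 3)) (h : InAlpha K f) : trunc f ∈ Tsub K := by
  induction h with
  | g1 =>
    have : (bar (ofList [1, 1, 2]) : Zin K (Fin 3)) = Gv K 0 := by simp [Gv]
    rw [this, trunc_Gv]
    exact Submodule.subset_span (Or.inl ⟨0, rfl⟩)
  | g2 =>
    have : (bar (ofList [1, 0, 2]) : Zin K (Fin 3)) = Gv K 1 := by simp [Gv]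
    rw [this, trunc_Gv]
    exact Submodule.subset_span (Or.inl ⟨1, rfl⟩)
  | g3 =>
    have : (bar (ofList [1, 0, 1]) : Zin K (Fin 3)) = Gv K 2 := by simp [Gv]
    rw [this, trunc_Gv]
    exact Submodule.subset_span (Or.inl ⟨2, rfl⟩)
  | zero => rw [trunc_zero]; exact zero_mem _
  | add hf hg ihf ihg => rw [trunc_add]; exact add_mem ihf ihg
  | smul c hf ihf => rw [trunc_smul]; exact Submodule.smul_mem _ _ ihf
  | brl hf hg ihf =>
    rw [trunc_zbracket_left]
    exact bracket_closure _ ihf _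
  | brr hf hg ihf =>
    rw [zbracket_swap, trunc_neg]
    refine neg_mem ?_
    rw [trunc_zbracket_left]
    exact bracket_closure _ ihf _

theorem LL_add (f g : Zin K (Fin 3)) : LL K (f + g) = LL K f + LL K g := by
  simp [LL, Finsupp.add_apply]; ring

theorem LL_smul (c : K) (f : Zin K (Fin 3)) : LL K (c • f) = c * LL K f := by
  simp [LL, Finsupp.smul_apply]; ring

set_option maxHeartbeats 800000 in
theorem LL_Gv_0 : LL K (Gv K 0) = 0 := by
  simp only [Gv, Matrix.cons_val_zero, Matrix.cons_val_one, Matrix.head_cons,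
    Matrix.cons_val_two, Matrix.tail_cons, bar3_expand]
  simp (config := { decide := true }) [LL, ofList, Finsupp.single_apply, Subtype.mk.injEq]
  try norm_num

set_option maxHeartbeats 800000 in
theorem LL_Gv_1 : LL K (Gv K 1) = 0 := by
  simp only [Gv, Matrix.cons_val_zero, Matrix.cons_val_one, Matrix.head_cons,
    Matrix.cons_val_two, Matrix.tail_cons, bar3_expand]
  simp (config := { decide := true }) [LL, ofList, Finsupp.single_apply, Subtype.mk.injEq]
  try norm_num

set_option maxHeartbeats 800000 in
theorem LL_Gv_2 : LL K (Gv K 2) = 0 := by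
  simp only [Gv, Matrix.cons_val_zero, Matrix.cons_val_one, Matrix.head_cons,
    Matrix.cons_val_two, Matrix.tail_cons, bar3_expand]
  simp (config := { decide := true }) [LL, ofList, Finsupp.single_apply, Subtype.mk.injEq]
  try norm_num

set_option maxHeartbeats 800000 in
theorem LL_gen_00 : LL K (zbracket (Gv K 0) (ofLetter 0)) = 0 := by
  simp only [Gv, Matrix.cons_val_zero, Matrix.cons_val_one, Matrix.head_cons,
    Matrix.cons_val_two, Matrix.tail_cons, ofLetter_eq, zbracket, bar3_expand,
    zmul_sub_right, zmul_sub_left, zmul_append, zmul_letter₃,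
    List.cons_append, List.nil_append, ne_eq, reduceCtorEq, not_false_eq_true]
  simp (config := { decide := true }) [LL, ofList, Finsupp.single_apply, Subtype.mk.injEq]
  try norm_num

set_option maxHeartbeats 800000 in
theorem LL_gen_01 : LL K (zbracket (Gv K 0) (ofLetter 1)) = 0 := by
  simp only [Gv, Matrix.cons_val_zero, Matrix.cons_val_one, Matrix.head_cons,
    Matrix.cons_val_two, Matrix.tail_cons, ofLetter_eq, zbracket, bar3_expand,
    zmul_sub_right, zmul_sub_left, zmul_append, zmul_letter₃,
    List.cons_append, List.nil_append, ne_eq, reduceCtorEq, not_false_eq_true]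
  simp (config := { decide := true }) [LL, ofList, Finsupp.single_apply, Subtype.mk.injEq]
  try norm_num

set_option maxHeartbeats 800000 in
theorem LL_gen_02 : LL K (zbracket (Gv K 0) (ofLetter 2)) = 0 := by
  simp only [Gv, Matrix.cons_val_zero, Matrix.cons_val_one, Matrix.head_cons,
    Matrix.cons_val_two, Matrix.tail_cons, ofLetter_eq, zbracket, bar3_expand,
    zmul_sub_right, zmul_sub_left, zmul_append, zmul_letter₃,
    List.cons_append, List.nil_append, ne_eq, reduceCtorEq, not_false_eq_true]
  simp (config := { decide := true }) [LL, ofList, Finsupp.single_apply, Subtype.mk.injEq]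
  try norm_num

set_option maxHeartbeats 800000 in
theorem LL_gen_10 : LL K (zbracket (Gv K 1) (ofLetter 0)) = 0 := by
  simp only [Gv, Matrix.cons_val_zero, Matrix.cons_val_one, Matrix.head_cons,
    Matrix.cons_val_two, Matrix.tail_cons, ofLetter_eq, zbracket, bar3_expand,
    zmul_sub_right, zmul_sub_left, zmul_append, zmul_letter₃,
    List.cons_append, List.nil_append, ne_eq, reduceCtorEq, not_false_eq_true]
  simp (config := { decide := true }) [LL, ofList, Finsupp.single_apply, Subtype.mk.injEq]
  try norm_num

set_option maxHeartbeats 800000 in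
theorem LL_gen_11 : LL K (zbracket (Gv K 1) (ofLetter 1)) = 0 := by
  simp only [Gv, Matrix.cons_val_zero, Matrix.cons_val_one, Matrix.head_cons,
    Matrix.cons_val_two, Matrix.tail_cons, ofLetter_eq, zbracket, bar3_expand,
    zmul_sub_right, zmul_sub_left, zmul_append, zmul_letter₃,
    List.cons_append, List.nil_append, ne_eq, reduceCtorEq, not_false_eq_true]
  simp (config := { decide := true }) [LL, ofList, Finsupp.single_apply, Subtype.mk.injEq]
  try norm_num

set_option maxHeartbeats 800000 in
theorem LL_gen_12 : LL K (zbracket (Gv K 1) (ofLetter 2)) = 0 := by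
  simp only [Gv, Matrix.cons_val_zero, Matrix.cons_val_one, Matrix.head_cons,
    Matrix.cons_val_two, Matrix.tail_cons, ofLetter_eq, zbracket, bar3_expand,
    zmul_sub_right, zmul_sub_left, zmul_append, zmul_letter₃,
    List.cons_append, List.nil_append, ne_eq, reduceCtorEq, not_false_eq_true]
  simp (config := { decide := true }) [LL, ofList, Finsupp.single_apply, Subtype.mk.injEq]
  try norm_num

set_option maxHeartbeats 800000 in
theorem LL_gen_20 : LL K (zbracket (Gv K 2) (ofLetter 0)) = 0 := by
  simp only [Gv, Matrix.cons_val_zero, Matrix.cons_val_one, Matrix.head_cons,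
    Matrix.cons_val_two, Matrix.tail_cons, ofLetter_eq, zbracket, bar3_expand,
    zmul_sub_right, zmul_sub_left, zmul_append, zmul_letter₃,
    List.cons_append, List.nil_append, ne_eq, reduceCtorEq, not_false_eq_true]
  simp (config := { decide := true }) [LL, ofList, Finsupp.single_apply, Subtype.mk.injEq]
  try norm_num

set_option maxHeartbeats 800000 in
theorem LL_gen_21 : LL K (zbracket (Gv K 2) (ofLetter 1)) = 0 := by
  simp only [Gv, Matrix.cons_val_zero, Matrix.cons_val_one, Matrix.head_cons,
    Matrix.cons_val_two, Matrix.tail_cons, ofLetter_eq, zbracket, bar3_expand,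
    zmul_sub_right, zmul_sub_left, zmul_append, zmul_letter₃,
    List.cons_append, List.nil_append, ne_eq, reduceCtorEq, not_false_eq_true]
  simp (config := { decide := true }) [LL, ofList, Finsupp.single_apply, Subtype.mk.injEq]
  try norm_num

set_option maxHeartbeats 800000 in
theorem LL_gen_22 : LL K (zbracket (Gv K 2) (ofLetter 2)) = 0 := by
  simp only [Gv, Matrix.cons_val_zero, Matrix.cons_val_one, Matrix.head_cons,
    Matrix.cons_val_two, Matrix.tail_cons, ofLetter_eq, zbracket, bar3_expand,
    zmul_sub_right, zmul_sub_left, zmul_append, zmul_letter₃,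
    List.cons_append, List.nil_append, ne_eq, reduceCtorEq, not_false_eq_true]
  simp (config := { decide := true }) [LL, ofList, Finsupp.single_apply, Subtype.mk.injEq]
  try norm_num

theorem LL_Gv (k : Fin 3) : LL K (Gv K k) = 0 := by
  fin_cases k
  · exact LL_Gv_0
  · exact LL_Gv_1
  · exact LL_Gv_2

theorem LL_gen (k a : Fin 3) : LL K (zbracket (Gv K k) (ofLetter a)) = 0 := by
  fin_cases k <;> fin_cases a
  · exact LL_gen_00
  · exact LL_gen_01
  · exact LL_gen_02
  · exact LL_gen_10
  · exact LL_gen_11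
  · exact LL_gen_12
  · exact LL_gen_20
  · exact LL_gen_21
  · exact LL_gen_22

theorem L_vanish (v : Zin K (Fin 3)) (hv : v ∈ Tsub K) : LL K v = 0 := by
  induction hv using Submodule.span_induction with
  | mem s hs =>
    rcases hs with ⟨k, rfl⟩ | ⟨⟨k, a⟩, rfl⟩
    · exact LL_Gv k
    · exact LL_gen k a
  | zero => simp [LL]
  | add x y hx hy ihx ihy => rw [LL_add, ihx, ihy, add_zero]
  | smul c x hx ihx => rw [LL_smul, ihx, mul_zero]

theorem bar4_expand (a b c d : Fin 3) :
    (bar (ofList [a, b, c, d]) : Zin K (Fin 3)) = ofList [a, b, c, d] - ofList [a, b, d, c] := by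
  rw [bar_ofList₂]
  simp [swapLast]

theorem supp_bar4 (a b c d : Fin 3) :
    ∀ u ∈ (bar (ofList [a, b, c, d]) : Zin K (Fin 3)).support, u.1.length = 4 := by
  rw [bar4_expand, ofList_eq_single _ (by simp), ofList_eq_single _ (by simp)]
  intro u hu
  rcases supp_sub_pair _ _ _ _ u hu with h | h <;> subst h <;> rfl

theorem w_not_in_alpha [CharZero K] :
    ¬ InAlpha K (bar (ofList [0, 1, 1, 2]) - bar (ofList [1, 1, 0, 2])
        + bar (ofList [2, 1, 0, 1])) := by
  intro h
  have h1 := alpha_trunc _ h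
  have h2 : trunc (bar (ofList [0, 1, 1, 2]) - bar (ofList [1, 1, 0, 2])
      + bar (ofList [2, 1, 0, 1]) : Zin K (Fin 3)) =
      bar (ofList [0, 1, 1, 2]) - bar (ofList [1, 1, 0, 2]) + bar (ofList [2, 1, 0, 1]) := by
    apply trunc_eq_self
    intro u hu
    have h3 := Finsupp.support_add hu
    rw [Finset.mem_union] at h3
    rcases h3 with h3 | h3
    · have h4 := Finsupp.support_sub h3
      rw [Finset.mem_union] at h4
      rcases h4 with h4 | h4
      · rw [supp_bar4 _ _ _ _ u h4]
      · rw [supp_bar4 _ _ _ _ u h4]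
    · rw [supp_bar4 _ _ _ _ u h3]
  rw [h2] at h1
  have h5 := L_vanish _ h1
  have h6 : LL K (bar (ofList [0, 1, 1, 2]) - bar (ofList [1, 1, 0, 2])
      + bar (ofList [2, 1, 0, 1])) = 6 := by
    simp only [bar_ofList₂, swapLast, List.reverse_cons, List.reverse_nil,
      List.nil_append, List.cons_append]
    simp (config := { decide := true }) [LL, ofList, Finsupp.single_apply, Subtype.mk.injEq]
    try norm_num
  rw [h6] at h5
  norm_num at h5

end Part3

section Part4
variable {K : Type} [Field K]

theorem keyG1 (K : Type) [Field K] :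
    (2 : K) • (bar (ofList [1, 1, 2]) : Zin K (Fin 3)) =
      -zbracket (zbracket (ofLetter 1) (ofLetter 2)) (ofLetter 1) := by
  simp only [ofLetter_eq, zbracket, bar3_expand, zmul_sub_right, zmul_sub_left,
    zmul_add_right, zmul_add_left, zmul_append, zmul_letter₂, zmul_letter₃,
    List.cons_append, List.nil_append, ne_eq, reduceCtorEq, not_false_eq_true]
  module

theorem keyG2 (K : Type) [Field K] :
    (2 : K) • (bar (ofList [1, 0, 2]) : Zin K (Fin 3)) =
      -(zbracket (zbracket (ofLetter 0) (ofLetter 1)) (ofLetter 2) +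
        zbracket (zbracket (ofLetter 1) (ofLetter 2)) (ofLetter 0)) := by
  simp only [ofLetter_eq, zbracket, bar3_expand, zmul_sub_right, zmul_sub_left,
    zmul_add_right, zmul_add_left, zmul_append, zmul_letter₂, zmul_letter₃,
    List.cons_append, List.nil_append, ne_eq, reduceCtorEq, not_false_eq_true]
  module

theorem keyG3 (K : Type) [Field K] :
    (2 : K) • (bar (ofList [1, 0, 1]) : Zin K (Fin 3)) =
      -zbracket (zbracket (ofLetter 0) (ofLetter 1)) (ofLetter 1) := by
  simp only [ofLetter_eq, zbracket, bar3_expand, zmul_sub_right, zmul_sub_left,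
    zmul_add_right, zmul_add_left, zmul_append, zmul_letter₂, zmul_letter₃,
    List.cons_append, List.nil_append, ne_eq, reduceCtorEq, not_false_eq_true]
  module

/-- The commutator in a nonunital nonassociative ring. -/
def brkA {R : Type} [NonUnitalNonAssocRing R] (a b : R) : R := a * b - b * a

theorem zinA (A : ZinbielAlgebra K) (x y z : A.carrier) :
    -brkA (brkA (brkA x y) z) y + (brkA (brkA (brkA x z) y) y - brkA (brkA (brkA y z) x) y)
      = -(x * brkA (brkA y z) y) +
        (y * (brkA (brkA x y) z + brkA (brkA y z) x) - z * brkA (brkA x y) y) := by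
  have zin' : ∀ a b c : A.carrier, a * (b * c) = a * b * c + b * a * c := fun a b c => by
    rw [A.zinbiel, add_mul]
  simp only [brkA, mul_sub, sub_mul, mul_add, add_mul, zin']
  abel

-- elements of ST3
theorem memST {f : Zin K (Fin 3)} (h : InST f) : f ∈ ST3 K := Submodule.subset_span h

noncomputable def el1 (K : Type) [Field K] (a : Fin 3) : ST3 K :=
  ⟨ofLetter a, memST (.letter a)⟩

noncomputable def el2 (K : Type) [Field K] (a b : Fin 3) : ST3 K :=
  ⟨zbracket (ofLetter a) (ofLetter b), memST (.bracket (.letter a) (.letter b))⟩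

noncomputable def el3 (K : Type) [Field K] (a b c : Fin 3) : ST3 K :=
  ⟨zbracket (zbracket (ofLetter a) (ofLetter b)) (ofLetter c),
    memST (.bracket (.bracket (.letter a) (.letter b)) (.letter c))⟩

noncomputable def el4 (K : Type) [Field K] (a b c d : Fin 3) : ST3 K :=
  ⟨zbracket (zbracket (zbracket (ofLetter a) (ofLetter b)) (ofLetter c)) (ofLetter d),
    memST (.bracket (.bracket (.bracket (.letter a) (.letter b)) (.letter c)) (.letter d))⟩

end Part4



set_option maxHeartbeats 1000000 in
/-- The element `w = \bar{xyyz} − \bar{yyxz} + \bar{zyxy}` lies in `{α} ∩ ST({x,y,z})`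
but not in `α`; consequently `ST({x,y,z})/α` is not special: there is no homomorphism
from `ST({x,y,z})` to the minus-algebra of a Zinbiel algebra with kernel exactly `α`. -/
theorem homomorphic_image_three_generators_not_special (K : Type) [Field K] [CharZero K] :
    InZAlpha K (bar (ofList [0, 1, 1, 2]) - bar (ofList [1, 1, 0, 2])
        + bar (ofList [2, 1, 0, 1])) ∧
    InST (bar (ofList (K := K) [0, 1, 1, 2]) - bar (ofList [1, 1, 0, 2])
        + bar (ofList [2, 1, 0, 1])) ∧
    ¬ InAlpha K (bar (ofList [0, 1, 1, 2]) - bar (ofList [1, 1, 0, 2])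
        + bar (ofList [2, 1, 0, 1])) ∧
    ¬ ∃ (A : ZinbielAlgebra K) (φ : ST3 K →ₗ[K] A.carrier),
        (∀ s t u : ST3 K,
          (u : Zin K (Fin 3)) = zbracket (s : Zin K (Fin 3)) (t : Zin K (Fin 3)) →
          φ u = φ s * φ t - φ t * φ s) ∧
        (∀ f : ST3 K, φ f = 0 ↔ InAlpha K (f : Zin K (Fin 3))) := by
  have hZA : InZAlpha K (bar (ofList [0, 1, 1, 2]) - bar (ofList [1, 1, 0, 2])
      + bar (ofList [2, 1, 0, 1])) := by
    rw [keyA K]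
    exact InZAlpha.add (InZAlpha.mull _ (InZAlpha.ofAlpha InAlpha.g1))
      (InZAlpha.add (InZAlpha.smul _ (InZAlpha.mull _ (InZAlpha.ofAlpha InAlpha.g2)))
        (InZAlpha.mull _ (InZAlpha.ofAlpha InAlpha.g3)))
  have hST : InST (bar (ofList (K := K) ([0, 1, 1, 2] : List ℕ)) - bar (ofList [1, 1, 0, 2])
      + bar (ofList [2, 1, 0, 1])) := by
    rw [show (bar (ofList ([0, 1, 1, 2] : List ℕ)) - bar (ofList [1, 1, 0, 2])
        + bar (ofList [2, 1, 0, 1]) : Zin K ℕ) =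
        (2⁻¹ : K) • ((-1 : K) • zbracket (zbracket (zbracket (ofLetter (0 : ℕ)) (ofLetter 1)) (ofLetter 2)) (ofLetter 1) +
        (zbracket (zbracket (zbracket (ofLetter (0 : ℕ)) (ofLetter 2)) (ofLetter 1)) (ofLetter 1) +
          (-1 : K) • zbracket (zbracket (zbracket (ofLetter (1 : ℕ)) (ofLetter 2)) (ofLetter 0)) (ofLetter 1))) by
      rw [show (bar (ofList ([0, 1, 1, 2] : List ℕ)) - bar (ofList [1, 1, 0, 2])
          + bar (ofList [2, 1, 0, 1]) : Zin K ℕ) =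
          (2⁻¹ : K) • ((2 : K) • (bar (ofList ([0, 1, 1, 2] : List ℕ)) - bar (ofList [1, 1, 0, 2])
          + bar (ofList [2, 1, 0, 1]))) by
        rw [smul_smul, show ((2:K)⁻¹ * 2 : K) = 1 by norm_num, one_smul]]
      rw [keyBN K]
      module]
    exact InST.smul _ (InST.add
      (InST.smul _ (.bracket (.bracket (.bracket (.letter 0) (.letter 1)) (.letter 2)) (.letter 1)))
      (InST.add (.bracket (.bracket (.bracket (.letter 0) (.letter 2)) (.letter 1)) (.letter 1))
        (InST.smul _ (.bracket (.bracket (.bracket (.letter 1) (.letter 2)) (.letter 0)) (.letter 1)))))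
  have hSTF : InST (bar (ofList (K := K) ([0, 1, 1, 2] : List (Fin 3))) - bar (ofList [1, 1, 0, 2])
      + bar (ofList [2, 1, 0, 1])) := by
    rw [show (bar (ofList ([0, 1, 1, 2] : List (Fin 3))) - bar (ofList [1, 1, 0, 2])
        + bar (ofList [2, 1, 0, 1]) : Zin K (Fin 3)) =
        (2⁻¹ : K) • ((-1 : K) • zbracket (zbracket (zbracket (ofLetter (0 : Fin 3)) (ofLetter 1)) (ofLetter 2)) (ofLetter 1) +
        (zbracket (zbracket (zbracket (ofLetter (0 : Fin 3)) (ofLetter 2)) (ofLetter 1)) (ofLetter 1) +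
          (-1 : K) • zbracket (zbracket (zbracket (ofLetter (1 : Fin 3)) (ofLetter 2)) (ofLetter 0)) (ofLetter 1))) by
      rw [show (bar (ofList ([0, 1, 1, 2] : List (Fin 3))) - bar (ofList [1, 1, 0, 2])
          + bar (ofList [2, 1, 0, 1]) : Zin K (Fin 3)) =
          (2⁻¹ : K) • ((2 : K) • (bar (ofList ([0, 1, 1, 2] : List (Fin 3))) - bar (ofList [1, 1, 0, 2])
          + bar (ofList [2, 1, 0, 1]))) by
        rw [smul_smul, show ((2:K)⁻¹ * 2 : K) = 1 by norm_num, one_smul]]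
      rw [keyB K]
      module]
    exact InST.smul _ (InST.add
      (InST.smul _ (.bracket (.bracket (.bracket (.letter 0) (.letter 1)) (.letter 2)) (.letter 1)))
      (InST.add (.bracket (.bracket (.bracket (.letter 0) (.letter 2)) (.letter 1)) (.letter 1))
        (InST.smul _ (.bracket (.bracket (.bracket (.letter 1) (.letter 2)) (.letter 0)) (.letter 1)))))
  refine ⟨hZA, hST, w_not_in_alpha, ?_⟩
  rintro ⟨A, φ, Hbr, Hker⟩
  -- bracket evaluation lemmas
  have h2 : ∀ a b : Fin 3, φ (el2 K a b) = brkA (φ (el1 K a)) (φ (el1 K b)) :=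
    fun a b => Hbr (el1 K a) (el1 K b) (el2 K a b) rfl
  have h3 : ∀ a b c : Fin 3, φ (el3 K a b c) =
      brkA (brkA (φ (el1 K a)) (φ (el1 K b))) (φ (el1 K c)) := by
    intro a b c
    have := Hbr (el2 K a b) (el1 K c) (el3 K a b c) rfl
    rw [h2] at this
    exact this
  have h4 : ∀ a b c d : Fin 3, φ (el4 K a b c d) =
      brkA (brkA (brkA (φ (el1 K a)) (φ (el1 K b))) (φ (el1 K c))) (φ (el1 K d)) := by
    intro a b c d
    have := Hbr (el3 K a b c) (el1 K d) (el4 K a b c d) rfl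
    rw [h3] at this
    exact this
  -- the generators vanish
  have hG1val : (bar (ofList [1, 1, 2]) : Zin K (Fin 3)) =
      (-(2⁻¹ : K)) • zbracket (zbracket (ofLetter 1) (ofLetter 2)) (ofLetter 1) := by
    rw [show (bar (ofList [1, 1, 2]) : Zin K (Fin 3)) =
        (2⁻¹ : K) • ((2 : K) • bar (ofList [1, 1, 2])) by
      rw [smul_smul, show ((2:K)⁻¹ * 2 : K) = 1 by norm_num, one_smul], keyG1 K]
    module
  have hG2val : (bar (ofList [1, 0, 2]) : Zin K (Fin 3)) =
      (-(2⁻¹ : K)) • (zbracket (zbracket (ofLetter 0) (ofLetter 1)) (ofLetter 2) +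
        zbracket (zbracket (ofLetter 1) (ofLetter 2)) (ofLetter 0)) := by
    rw [show (bar (ofList [1, 0, 2]) : Zin K (Fin 3)) =
        (2⁻¹ : K) • ((2 : K) • bar (ofList [1, 0, 2])) by
      rw [smul_smul, show ((2:K)⁻¹ * 2 : K) = 1 by norm_num, one_smul], keyG2 K]
    module
  have hG3val : (bar (ofList [1, 0, 1]) : Zin K (Fin 3)) =
      (-(2⁻¹ : K)) • zbracket (zbracket (ofLetter 0) (ofLetter 1)) (ofLetter 1) := by
    rw [show (bar (ofList [1, 0, 1]) : Zin K (Fin 3)) =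
        (2⁻¹ : K) • ((2 : K) • bar (ofList [1, 0, 1])) by
      rw [smul_smul, show ((2:K)⁻¹ * 2 : K) = 1 by norm_num, one_smul], keyG3 K]
    module
  let G1el : ST3 K := ⟨bar (ofList [1, 1, 2]), by
    rw [hG1val]
    exact memST (.smul _ (.bracket (.bracket (.letter 1) (.letter 2)) (.letter 1)))⟩
  let G2el : ST3 K := ⟨bar (ofList [1, 0, 2]), by
    rw [hG2val]
    exact memST (.smul _ (.add (.bracket (.bracket (.letter 0) (.letter 1)) (.letter 2))
      (.bracket (.bracket (.letter 1) (.letter 2)) (.letter 0))))⟩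
  let G3el : ST3 K := ⟨bar (ofList [1, 0, 1]), by
    rw [hG3val]
    exact memST (.smul _ (.bracket (.bracket (.letter 0) (.letter 1)) (.letter 1)))⟩
  have hφG1 : φ G1el = 0 := (Hker G1el).mpr InAlpha.g1
  have hφG2 : φ G2el = 0 := (Hker G2el).mpr InAlpha.g2
  have hφG3 : φ G3el = 0 := (Hker G3el).mpr InAlpha.g3
  have hz1 : brkA (brkA (φ (el1 K 1)) (φ (el1 K 2))) (φ (el1 K 1)) = 0 := by
    have eG1 : el3 K 1 2 1 = (-2 : K) • G1el := Subtype.ext (by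
      show zbracket (zbracket (ofLetter 1) (ofLetter 2)) (ofLetter 1) =
        (-2 : K) • (bar (ofList [1, 1, 2]) : Zin K (Fin 3))
      rw [hG1val, smul_smul, show ((-2 : K) * -(2⁻¹) : K) = 1 by norm_num, one_smul])
    have := congrArg φ eG1
    rw [map_smul, hφG1, smul_zero, h3] at this
    exact this
  have hz3 : brkA (brkA (φ (el1 K 0)) (φ (el1 K 1))) (φ (el1 K 1)) = 0 := by
    have eG3 : el3 K 0 1 1 = (-2 : K) • G3el := Subtype.ext (by
      show zbracket (zbracket (ofLetter 0) (ofLetter 1)) (ofLetter 1) =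
        (-2 : K) • (bar (ofList [1, 0, 1]) : Zin K (Fin 3))
      rw [hG3val, smul_smul, show ((-2 : K) * -(2⁻¹) : K) = 1 by norm_num, one_smul])
    have := congrArg φ eG3
    rw [map_smul, hφG3, smul_zero, h3] at this
    exact this
  have hz2 : brkA (brkA (φ (el1 K 0)) (φ (el1 K 1))) (φ (el1 K 2)) +
      brkA (brkA (φ (el1 K 1)) (φ (el1 K 2))) (φ (el1 K 0)) = 0 := by
    have eG2 : el3 K 0 1 2 + el3 K 1 2 0 = (-2 : K) • G2el := Subtype.ext (by
      show zbracket (zbracket (ofLetter 0) (ofLetter 1)) (ofLetter 2) +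
          zbracket (zbracket (ofLetter 1) (ofLetter 2)) (ofLetter 0) =
        (-2 : K) • (bar (ofList [1, 0, 2]) : Zin K (Fin 3))
      rw [hG2val, smul_smul, show ((-2 : K) * -(2⁻¹) : K) = 1 by norm_num, one_smul])
    have := congrArg φ eG2
    rw [map_add, map_smul, hφG2, smul_zero, h3, h3] at this
    exact this
  -- the element w
  set wel : ST3 K := ⟨bar (ofList [0, 1, 1, 2]) - bar (ofList [1, 1, 0, 2])
    + bar (ofList [2, 1, 0, 1]), memST hSTF⟩ with hwel
  have ew : (2 : K) • wel = (-1 : K) • el4 K 0 1 2 1 + (el4 K 0 2 1 1 + (-1 : K) • el4 K 1 2 0 1) :=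
    Subtype.ext (by
      show (2 : K) • (bar (ofList [0, 1, 1, 2]) - bar (ofList [1, 1, 0, 2])
          + bar (ofList [2, 1, 0, 1]) : Zin K (Fin 3)) =
        (-1 : K) • zbracket (zbracket (zbracket (ofLetter (0 : Fin 3)) (ofLetter 1)) (ofLetter 2)) (ofLetter 1) +
          (zbracket (zbracket (zbracket (ofLetter (0 : Fin 3)) (ofLetter 2)) (ofLetter 1)) (ofLetter 1) +
            (-1 : K) • zbracket (zbracket (zbracket (ofLetter (1 : Fin 3)) (ofLetter 2)) (ofLetter 0)) (ofLetter 1))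
      rw [keyB K]
      module)
  have hphiw := congrArg φ ew
  rw [map_smul, map_add, map_add, map_smul, map_smul, h4, h4, h4] at hphiw
  rw [neg_one_smul, neg_one_smul, ← sub_eq_add_neg] at hphiw
  rw [zinA A (φ (el1 K 0)) (φ (el1 K 1)) (φ (el1 K 2)), hz1, hz2, hz3] at hphiw
  rw [mul_zero, mul_zero, mul_zero, neg_zero, zero_sub, zero_add, neg_zero] at hphiw
  have hw0 : φ wel = 0 := by
    rw [show φ wel = (2⁻¹ : K) • ((2 : K) • φ wel) by
      rw [smul_smul, show ((2:K)⁻¹ * 2 : K) = 1 by norm_num, one_smul], hphiw, smul_zero]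
  exact w_not_in_alpha ((Hker wel).mp hw0)
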